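/- Let X_0 be a real-valued random variable such that 0 < G(r) < ∞ for every r ≥ 0. Then for every r ≥ 0, the variance Var[U_r(X_0)] is strictly positive. -/

import Mathlib

open MeasureTheory ProbabilityTheory Filter Asymptotics
open scoped ENNReal Topology NNReal

noncomputable section

/-- The shrinking operator `U_r : ℝ → ℝ` (for `r ≥ 0`):
`U_r(x) = x - r` if `x > r`, `0` if `|x| ≤ r`, and `x + r` if `x < -r`. -/
def shrink (r x : ℝ) : ℝ := if r < x then x - r else if x < -r then x + r else 0

variable {Ω : Type*}

/-- `G(r) := ∫₀^∞ t · P(|X| > t + r) dt`. -/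
def Gfun [MeasurableSpace Ω] (P : Measure Ω) (X : Ω → ℝ) (r : ℝ) : ℝ≥0∞ :=
  ∫⁻ t in Set.Ioi (0 : ℝ), ENNReal.ofReal t * P {ω | t + r < |X ω|}

/-- Strict stationarity of a two-sided sequence of random variables: for all `j, l ∈ ℤ`
and `m ≥ 0`, the random vectors `(X_j, …, X_{j+m})` and `(X_l, …, X_{l+m})` have the
same distribution. -/
def StrictlyStationary [MeasurableSpace Ω] (P : Measure Ω) (X : ℤ → Ω → ℝ) : Prop :=
  ∀ (j l : ℤ) (m : ℕ),
    Measure.map (fun ω => fun i : Fin (m + 1) => X (j + i) ω) P =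
    Measure.map (fun ω => fun i : Fin (m + 1) => X (l + i) ω) P

/-- The correlation coefficient of two real random variables. -/
def corr [MeasurableSpace Ω] (P : Measure Ω) (f g : Ω → ℝ) : ℝ :=
  (∫ ω, (f ω - ∫ x, f x ∂P) * (g ω - ∫ x, g x ∂P) ∂P) /
    (Real.sqrt (∫ ω, (f ω - ∫ x, f x ∂P) ^ 2 ∂P) *
      Real.sqrt (∫ ω, (g ω - ∫ x, g x ∂P) ^ 2 ∂P))

/-- The maximal correlation coefficient `ρ(𝒜, ℬ)`: the supremum of `|Corr(f,g)|` over
square-integrable `f` measurable w.r.t. `𝒜` and `g` measurable w.r.t. `ℬ`. -/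
def maxCorr [mΩ : MeasurableSpace Ω] (P : Measure Ω) (A B : MeasurableSpace Ω) : ℝ :=
  sSup { c | ∃ f g : Ω → ℝ, Measurable[A] f ∧ Measurable[B] g ∧
    MemLp (m0 := mΩ) f 2 P ∧ MemLp (m0 := mΩ) g 2 P ∧ c = |@corr Ω mΩ P f g| }

/-- The strong mixing coefficient `α(𝒜, ℬ)`. -/
def alphaMix [MeasurableSpace Ω] (P : Measure Ω) (A B : MeasurableSpace Ω) : ℝ :=
  sSup { c | ∃ s t : Set Ω, MeasurableSet[A] s ∧ MeasurableSet[B] t ∧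
    c = |(P (s ∩ t)).toReal - (P s).toReal * (P t).toReal| }

/-- The σ-field generated by the random variables `X k`, `k ∈ S`. -/
def genFrom [MeasurableSpace Ω] (X : ℤ → Ω → ℝ) (S : Set ℤ) : MeasurableSpace Ω :=
  ⨆ k ∈ S, MeasurableSpace.comap (X k) inferInstance

/-- `ρ(n) = ρ(σ(X_k, k ≤ 0), σ(X_k, k ≥ n))`. -/
def rhoCoef [MeasurableSpace Ω] (P : Measure Ω) (X : ℤ → Ω → ℝ) (n : ℕ) : ℝ :=
  maxCorr P (genFrom X {k | k ≤ 0}) (genFrom X {k | (n : ℤ) ≤ k})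

/-- `α(n) = α(σ(X_k, k ≤ 0), σ(X_k, k ≥ n))`. -/
def alphaCoef [MeasurableSpace Ω] (P : Measure Ω) (X : ℤ → Ω → ℝ) (n : ℕ) : ℝ :=
  alphaMix P (genFrom X {k | k ≤ 0}) (genFrom X {k | (n : ℤ) ≤ k})

/-- `ρ*(n)`: the supremum of `ρ(σ(X_k, k ∈ S), σ(X_k, k ∈ T))` over all pairs of nonempty
disjoint `S, T ⊆ ℤ` with `dist(S,T) ≥ n`. -/
def rhoStarCoef [MeasurableSpace Ω] (P : Measure Ω) (X : ℤ → Ω → ℝ) (n : ℕ) : ℝ :=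
  sSup { c | ∃ S T : Set ℤ, S.Nonempty ∧ T.Nonempty ∧ Disjoint S T ∧
    (∀ s ∈ S, ∀ t ∈ T, (n : ℤ) ≤ |s - t|) ∧
    c = maxCorr P (genFrom X S) (genFrom X T) }

/-- `Y_{k,r} := U_r(X_k) - E[U_r(X_0)]`. -/
def Ymix [MeasurableSpace Ω] (P : Measure Ω) (X : ℤ → Ω → ℝ) (k : ℤ) (r : ℝ) (ω : Ω) : ℝ :=
  shrink r (X k ω) - ∫ ω', shrink r (X 0 ω') ∂P

/-!
By the layer cake formula, `E[U_r(X)²] = 2 G(r) < ∞`, so `U_r(X)` is square integrable.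
If its variance vanished, `U_r(X)` would be almost surely a constant `c`, hence `|X| ≤ |c| + r`
almost surely; but then `G(|c| + r) = 0`, contradicting `G > 0`.
-/

lemma measurable_shrink (r : ℝ) : Measurable (shrink r) :=
  Measurable.ite (measurableSet_lt measurable_const measurable_id) (measurable_id.sub_const r)
    (Measurable.ite (measurableSet_lt measurable_id measurable_const)
      (measurable_id.add_const r) measurable_const)

lemma lt_abs_shrink_iff {r t x : ℝ} (hr : 0 ≤ r) (ht : 0 ≤ t) :
    t < |shrink r x| ↔ t + r < |x| := by
  unfold shrink
  split_ifs with hxr hxnr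
  · rw [abs_of_nonneg (by linarith : 0 ≤ x - r), abs_of_pos (by linarith : 0 < x)]
    constructor <;> intro <;> linarith
  · rw [abs_of_nonpos (by linarith : x + r ≤ 0), abs_of_neg (by linarith : x < 0)]
    constructor <;> intro <;> linarith
  · have hx : |x| ≤ r := abs_le.2 ⟨by linarith, by linarith⟩
    rw [abs_zero]
    constructor <;> intro <;> linarith

lemma abs_le_abs_shrink_add {r : ℝ} (hr : 0 ≤ r) (x : ℝ) : |x| ≤ |shrink r x| + r :=
  not_lt.1 fun h => ((lt_abs_shrink_iff hr (abs_nonneg _)).2 h).false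

section Gfun

variable [MeasurableSpace Ω] {P : Measure Ω} {X : Ω → ℝ}

lemma Gfun_shrink_zero {r : ℝ} (hr : 0 ≤ r) :
    Gfun P (fun ω => shrink r (X ω)) 0 = Gfun P X r := by
  refine setLIntegral_congr_fun measurableSet_Ioi fun t ht => ?_
  simp only [add_zero, lt_abs_shrink_iff hr (le_of_lt ht)]

lemma lintegral_enorm_sq_eq_two_mul_Gfun (hX : AEMeasurable X P) :
    ∫⁻ ω, ‖X ω‖ₑ ^ (2 : ℝ) ∂P = 2 * Gfun P X 0 := by
  calc ∫⁻ ω, ‖X ω‖ₑ ^ (2 : ℝ) ∂P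
      = ∫⁻ ω, ENNReal.ofReal (|X ω| ^ (2 : ℝ)) ∂P := by
        refine lintegral_congr fun ω => ?_
        rw [Real.enorm_eq_ofReal_abs, ENNReal.ofReal_rpow_of_nonneg (abs_nonneg _) two_pos.le]
    _ = ENNReal.ofReal 2 * ∫⁻ t in Set.Ioi (0 : ℝ),
          P {ω | t < |X ω|} * ENNReal.ofReal (t ^ (2 - 1 : ℝ)) :=
        lintegral_rpow_eq_lintegral_meas_lt_mul P (ae_of_all _ fun ω => abs_nonneg _) hX.abs
          two_pos
    _ = 2 * Gfun P X 0 := by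
        simp only [Gfun, add_zero, ENNReal.ofReal_ofNat]
        congr 1
        refine setLIntegral_congr_fun measurableSet_Ioi fun t _ => ?_
        norm_num [mul_comm]

lemma memLp_two_of_Gfun_lt_top (hX : AEMeasurable X P) (hG : Gfun P X 0 < ∞) :
    MemLp X 2 P := by
  refine ⟨hX.aestronglyMeasurable, ?_⟩
  rw [eLpNorm_lt_top_iff_lintegral_rpow_enorm_lt_top two_ne_zero ENNReal.ofNat_ne_top,
    ENNReal.toReal_ofNat, lintegral_enorm_sq_eq_two_mul_Gfun hX]
  exact ENNReal.mul_lt_top ENNReal.ofNat_lt_top hG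

lemma Gfun_eq_zero_of_ae_abs_le {r : ℝ} (h : ∀ᵐ ω ∂P, |X ω| ≤ r) : Gfun P X r = 0 := by
  refine (setLIntegral_congr_fun measurableSet_Ioi fun t (ht : 0 < t) => ?_).trans
    lintegral_zero
  have htail : P {ω | t + r < |X ω|} = 0 :=
    measure_mono_null (fun ω (hω : t + r < |X ω|) => show ¬|X ω| ≤ r by linarith) (ae_iff.1 h)
  rw [htail, mul_zero]

end Gfun

/-- **Positivity of the variance in (4.3).** If `0 < G(r) < ∞` for all `r ≥ 0`, then
`Var[U_r(X_0)] > 0` for every `r ≥ 0`. -/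
theorem variance_shrink_pos
    [MeasurableSpace Ω] (P : Measure Ω) [IsProbabilityMeasure P]
    (X₀ : Ω → ℝ) (hmeas : Measurable X₀)
    (hG : ∀ r : ℝ, 0 ≤ r → 0 < Gfun P X₀ r ∧ Gfun P X₀ r < ∞) :
    ∀ r : ℝ, 0 ≤ r → 0 < variance (fun ω => shrink r (X₀ ω)) P := by
  intro r hr
  have hY : AEMeasurable (fun ω => shrink r (X₀ ω)) P :=
    ((measurable_shrink r).comp hmeas).aemeasurable
  have hL2 : MemLp (fun ω => shrink r (X₀ ω)) 2 P :=
    memLp_two_of_Gfun_lt_top hY ((Gfun_shrink_zero hr).trans_lt (hG r hr).2)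
  refine (variance_nonneg _ _).lt_of_ne' fun hvar => ?_
  set c := ∫ ω, shrink r (X₀ ω) ∂P
  have hbdd : ∀ᵐ ω ∂P, |X₀ ω| ≤ |c| + r := by
    filter_upwards [ae_eq_integral_of_variance_eq_zero hL2 hvar] with ω hω
    simpa only [hω] using abs_le_abs_shrink_add hr (X₀ ω)
  exact (hG _ (by positivity)).1.ne' (Gfun_eq_zero_of_ae_abs_le hbdd)
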